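/- Let H be a Poisson algebra that is also a Poisson Hopf-Galois algebra with Hopf-Galois map μ. If there exists an algebra map α : H → k with {H, H} ⊆ ker α, then H is a Poisson Hopf algebra with counit α, comultiplication Δ(x) = α(x₍₂₎) x₍₁₎ ⊗ x₍₃₎, and antipode S(x) = α(x₍₁₎x₍₃₎) x₍₂₎; in particular Δ({x,y}) = {Δ(x), Δ(y)}_{H⊗H} for all x, y ∈ H. -/

import Mathlib

open TensorProduct

noncomputable section

variable (k : Type*) [Field k]
variable (H : Type*) [CommRing H] [Algebra k H]

abbrev T3 := H ⊗[k] (H ⊗[k] H)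

def rightContr : T3 k H →ₗ[k] H ⊗[k] H :=
  TensorProduct.map LinearMap.id (LinearMap.mul' k H)

def leftContr : T3 k H →ₗ[k] H ⊗[k] H :=
  (TensorProduct.map (LinearMap.mul' k H) LinearMap.id)
    ∘ₗ (TensorProduct.assoc k H H H).symm.toLinearMap

structure IsHopfGaloisMap (μ : H →ₐ[k] T3 k H) : Prop where
  coassoc :
    (TensorProduct.map LinearMap.id (TensorProduct.map LinearMap.id μ.toLinearMap))
        ∘ₗ μ.toLinearMap =
      (TensorProduct.map LinearMap.id
          (TensorProduct.assoc k H H (H ⊗[k] H)).toLinearMap)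
        ∘ₗ (TensorProduct.assoc k H (H ⊗[k] H) (H ⊗[k] H)).toLinearMap
        ∘ₗ (TensorProduct.map μ.toLinearMap LinearMap.id)
        ∘ₗ μ.toLinearMap
  counit_right : ∀ r : H, rightContr k H (μ r) = r ⊗ₜ[k] (1 : H)
  counit_left : ∀ r : H, leftContr k H (μ r) = (1 : H) ⊗ₜ[k] r

structure IsPoissonBracket (br : H →ₗ[k] H →ₗ[k] H) : Prop where
  self : ∀ a : H, br a a = 0
  jacobi : ∀ a b c : H, br a (br b c) + br b (br c a) + br c (br a b) = 0
  leibniz : ∀ a b c : H, br a (b * c) = br a b * c + b * br a c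

/-- The bracket `{x⊗y⊗z, x'⊗y'⊗z'} = {x,x'}⊗yy'⊗zz' - xx'⊗{y,y'}⊗zz' + xx'⊗yy'⊗{z,z'}`. -/
def pbrT3 (br : H →ₗ[k] H →ₗ[k] H) (u v : T3 k H) : T3 k H :=
  TensorProduct.map₂ br
      (TensorProduct.map₂ (LinearMap.mul k H) (LinearMap.mul k H)) u v
    - TensorProduct.map₂ (LinearMap.mul k H)
        (TensorProduct.map₂ br (LinearMap.mul k H)) u v
    + TensorProduct.map₂ (LinearMap.mul k H)
        (TensorProduct.map₂ (LinearMap.mul k H) br) u v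

/-- The bracket `{a⊗b, a'⊗b'} = aa' ⊗ {b,b'} + {a,a'} ⊗ bb'` on `H ⊗ H`. -/
def pbrT2 (br : H →ₗ[k] H →ₗ[k] H) (u v : H ⊗[k] H) : H ⊗[k] H :=
  TensorProduct.map₂ (LinearMap.mul k H) br u v
    + TensorProduct.map₂ br (LinearMap.mul k H) u v

/-- `Δ(x) = α(x₍₂₎) x₍₁₎ ⊗ x₍₃₎`. -/
def comulOf (μ : H →ₐ[k] T3 k H) (α : H →ₐ[k] k) : H →ₗ[k] H ⊗[k] H :=
  (TensorProduct.map LinearMap.id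
      ((TensorProduct.lid k H).toLinearMap
        ∘ₗ TensorProduct.map α.toLinearMap LinearMap.id))
    ∘ₗ μ.toLinearMap

/-- `S(x) = α(x₍₁₎x₍₃₎) x₍₂₎`. -/
def antipodeOf (μ : H →ₐ[k] T3 k H) (α : H →ₐ[k] k) : H →ₗ[k] H :=
  (TensorProduct.rid k H).toLinearMap
    ∘ₗ (TensorProduct.lid k (H ⊗[k] k)).toLinearMap
    ∘ₗ (TensorProduct.map α.toLinearMap
          (TensorProduct.map LinearMap.id α.toLinearMap))
    ∘ₗ μ.toLinearMap

/-!
In Sweedler notation `μ x = x₁ ⊗ x₂ ⊗ x₃`, the maps `Δ` and `S` are obtained from `μ` by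
contracting tensor factors with `α`. Each Hopf algebra axiom for `(Δ, α, S)` is the image of the
coassociativity `x₁ ⊗ x₂ ⊗ μ x₃ = μ x₁ ⊗ x₂ ⊗ x₃` under a suitable contraction of `H^{⊗5}`,
after which one of the counit axioms `x₁ ⊗ x₂x₃ = x ⊗ 1`, `x₁x₂ ⊗ x₃ = 1 ⊗ x` collapses what is
left. `Δ` is multiplicative because `α` is an algebra map, and it preserves brackets because `α`
kills the bracket in the middle factor.
-/

section HopfGalois

variable {k H}

def counitLeft (α : H →ₐ[k] k) (M : Type*) [AddCommMonoid M] [Module k M] :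
    H ⊗[k] M →ₗ[k] M :=
  (TensorProduct.lid k M).toLinearMap ∘ₗ map α.toLinearMap LinearMap.id

def counitRight (α : H →ₐ[k] k) (M : Type*) [AddCommMonoid M] [Module k M] :
    M ⊗[k] H →ₗ[k] M :=
  (TensorProduct.rid k M).toLinearMap ∘ₗ map LinearMap.id α.toLinearMap

def contractMid (α : H →ₐ[k] k) : T3 k H →ₐ[k] H ⊗[k] H :=
  Algebra.TensorProduct.map (AlgHom.id k H)
    ((Algebra.TensorProduct.lid k H).toAlgHom.comp
      (Algebra.TensorProduct.map α (AlgHom.id k H)))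

def contractOuter (α : H →ₐ[k] k) : T3 k H →ₗ[k] H :=
  (TensorProduct.rid k H).toLinearMap
    ∘ₗ (TensorProduct.lid k (H ⊗[k] k)).toLinearMap
    ∘ₗ (map α.toLinearMap (map LinearMap.id α.toLinearMap))

def reassoc : T3 k H ⊗[k] (H ⊗[k] H) →ₗ[k] H ⊗[k] (H ⊗[k] T3 k H) :=
  (map LinearMap.id (TensorProduct.assoc k H H (H ⊗[k] H)).toLinearMap)
    ∘ₗ (TensorProduct.assoc k H (H ⊗[k] H) (H ⊗[k] H)).toLinearMap

variable (α : H →ₐ[k] k)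

@[simp]
lemma counitLeft_tmul {M : Type*} [AddCommMonoid M] [Module k M] (a : H) (m : M) :
    counitLeft α M (a ⊗ₜ m) = α a • m := by
  simp [counitLeft]

@[simp]
lemma counitRight_tmul {M : Type*} [AddCommMonoid M] [Module k M] (m : M) (a : H) :
    counitRight α M (m ⊗ₜ a) = α a • m := by
  simp [counitRight]

@[simp]
lemma contractMid_tmul (a b c : H) : contractMid α (a ⊗ₜ (b ⊗ₜ c)) = α b • (a ⊗ₜ[k] c) := by
  simp [contractMid, tmul_smul]

@[simp]
lemma contractOuter_tmul (a b c : H) : contractOuter α (a ⊗ₜ (b ⊗ₜ c)) = (α a * α c) • b := by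
  simp [contractOuter, smul_tmul', mul_comm, smul_smul]

@[simp]
lemma reassoc_tmul (a b c d e : H) :
    reassoc ((a ⊗ₜ (b ⊗ₜ c)) ⊗ₜ (d ⊗ₜ e)) = a ⊗ₜ[k] (b ⊗ₜ[k] (c ⊗ₜ[k] (d ⊗ₜ[k] e))) :=
  rfl

lemma comulOf_apply (μ : H →ₐ[k] T3 k H) (x : H) : comulOf k H μ α x = contractMid α (μ x) :=
  rfl

lemma antipodeOf_eq_comp (μ : H →ₐ[k] T3 k H) :
    antipodeOf k H μ α = contractOuter α ∘ₗ μ.toLinearMap :=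
  rfl

lemma counitLeft_comp_contractMid :
    counitLeft α H ∘ₗ (contractMid α).toLinearMap = counitLeft α H ∘ₗ leftContr k H := by
  ext a b c
  simp [leftContr, smul_smul, mul_comm]

lemma counitRight_comp_contractMid :
    counitRight α H ∘ₗ (contractMid α).toLinearMap = counitRight α H ∘ₗ rightContr k H := by
  ext a b c
  simp [rightContr, smul_smul]

lemma mul'_comp_lTensor_counitRight :
    LinearMap.mul' k H ∘ₗ map LinearMap.id (counitRight α H) =
      counitRight α H ∘ₗ leftContr k H := by
  ext a b c
  simp [leftContr]

lemma contractMid_pbrT3 (br : H →ₗ[k] H →ₗ[k] H) (hα : ∀ a b : H, α (br a b) = 0)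
    (u v : T3 k H) :
    contractMid α (pbrT3 k H br u v) = pbrT2 k H br (contractMid α u) (contractMid α v) := by
  have first : (map₂ br (map₂ (LinearMap.mul k H) (LinearMap.mul k H))).compr₂
      (contractMid α).toLinearMap =
      (map₂ br (LinearMap.mul k H)).compl₁₂ (contractMid α).toLinearMap
        (contractMid α).toLinearMap := by
    ext a b c a' b' c'
    simp [smul_smul, mul_comm]
  have middle : (map₂ (LinearMap.mul k H) (map₂ br (LinearMap.mul k H))).compr₂
      (contractMid α).toLinearMap = 0 := by
    ext a b c a' b' c'
    simp [hα]
  have last : (map₂ (LinearMap.mul k H) (map₂ (LinearMap.mul k H) br)).compr₂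
      (contractMid α).toLinearMap =
      (map₂ (LinearMap.mul k H) br).compl₁₂ (contractMid α).toLinearMap
        (contractMid α).toLinearMap := by
    ext a b c a' b' c'
    simp [smul_smul, mul_comm]
  have h₁ := LinearMap.congr_fun₂ first u v
  have h₂ := LinearMap.congr_fun₂ middle u v
  have h₃ := LinearMap.congr_fun₂ last u v
  simp only [LinearMap.compr₂_apply, LinearMap.compl₁₂_apply, AlgHom.toLinearMap_apply,
    LinearMap.zero_apply] at h₁ h₂ h₃
  simp only [pbrT3, pbrT2, map_add, map_sub, h₁, h₂, h₃, sub_zero, add_comm]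

lemma map_comulOf_apply {M N : Type*} [AddCommMonoid M] [Module k M] [AddCommMonoid N]
    [Module k N] (μ : H →ₐ[k] T3 k H) (f : H →ₗ[k] M) (g : H →ₗ[k] N) (x : H) :
    map f g (comulOf k H μ α x) = map f (g ∘ₗ counitLeft α H) (μ x) := by
  rw [comulOf, LinearMap.comp_apply, map_map, LinearMap.comp_id]
  rfl

namespace IsHopfGaloisMap

variable {α} {μ : H →ₐ[k] T3 k H}

lemma counitLeft_comulOf (hμ : IsHopfGaloisMap k H μ) (x : H) :
    counitLeft α H (comulOf k H μ α x) = x := by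
  refine (LinearMap.congr_fun (counitLeft_comp_contractMid α) (μ x)).trans ?_
  simp [hμ.counit_left]

lemma counitRight_comulOf (hμ : IsHopfGaloisMap k H μ) (x : H) :
    counitRight α H (comulOf k H μ α x) = x := by
  refine (LinearMap.congr_fun (counitRight_comp_contractMid α) (μ x)).trans ?_
  simp [hμ.counit_right]

lemma map_coassoc (hμ : IsHopfGaloisMap k H μ) {P : Type*} [AddCommMonoid P] [Module k P]
    (Φ : H ⊗[k] (H ⊗[k] T3 k H) →ₗ[k] P) {Θ : T3 k H →ₗ[k] P}
    {Ψ : T3 k H ⊗[k] (H ⊗[k] H) →ₗ[k] P}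
    (hΘ : Φ ∘ₗ map LinearMap.id (map LinearMap.id μ.toLinearMap) = Θ)
    (hΨ : Φ ∘ₗ reassoc = Ψ) (x : H) :
    Θ (μ x) = Ψ (map μ.toLinearMap LinearMap.id (μ x)) := by
  rw [← hΘ, ← hΨ]
  exact congrArg Φ (LinearMap.congr_fun hμ.coassoc x)

lemma comulOf_coassoc (hμ : IsHopfGaloisMap k H μ) :
    (TensorProduct.assoc k H H H).toLinearMap
        ∘ₗ (map (comulOf k H μ α) LinearMap.id) ∘ₗ comulOf k H μ α =
      (map LinearMap.id (comulOf k H μ α)) ∘ₗ comulOf k H μ α := by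
  let Φ : H ⊗[k] (H ⊗[k] T3 k H) →ₗ[k] T3 k H :=
    map LinearMap.id (counitLeft α (H ⊗[k] H) ∘ₗ map LinearMap.id (contractMid α).toLinearMap)
  have hΘ : Φ ∘ₗ map LinearMap.id (map LinearMap.id μ.toLinearMap) =
      map LinearMap.id (comulOf k H μ α) ∘ₗ (contractMid α).toLinearMap := by
    ext a b c
    simp [Φ, comulOf_apply, tmul_smul]
  have hΨ : Φ ∘ₗ reassoc =
      (TensorProduct.assoc k H H H).toLinearMap
        ∘ₗ map (contractMid α).toLinearMap (counitLeft α H) := by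
    ext a b c d e
    simp [Φ, smul_smul, ← smul_tmul', mul_comm]
  ext x
  have key := hμ.map_coassoc Φ hΘ hΨ x
  simp only [LinearMap.comp_apply, map_map, LinearMap.comp_id] at key ⊢
  rw [map_comulOf_apply, LinearMap.id_comp]
  exact key.symm

lemma mul'_rTensor_antipodeOf_comulOf (hμ : IsHopfGaloisMap k H μ) (x : H) :
    LinearMap.mul' k H (map (antipodeOf k H μ α) LinearMap.id (comulOf k H μ α x)) =
      algebraMap k H (α x) := by
  let Φ : H ⊗[k] (H ⊗[k] T3 k H) →ₗ[k] H := counitLeft α H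
    ∘ₗ map LinearMap.id
      (LinearMap.mul' k H ∘ₗ map LinearMap.id (counitLeft α H ∘ₗ (contractMid α).toLinearMap))
  have hΘ : Φ ∘ₗ map LinearMap.id (map LinearMap.id μ.toLinearMap) =
      counitLeft α H ∘ₗ rightContr k H := by
    ext a b c
    simp [Φ, rightContr, ← comulOf_apply, hμ.counitLeft_comulOf]
  have hΨ : Φ ∘ₗ reassoc = LinearMap.mul' k H ∘ₗ map (contractOuter α) (counitLeft α H) := by
    ext a b c d e
    simp [Φ, smul_smul, mul_comm, mul_left_comm]
  have key := hμ.map_coassoc Φ hΘ hΨ x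
  simp only [LinearMap.comp_apply, map_map, LinearMap.comp_id, hμ.counit_right] at key
  rw [map_comulOf_apply, LinearMap.id_comp, antipodeOf_eq_comp, ← key]
  simp [Algebra.algebraMap_eq_smul_one]

lemma mul'_lTensor_antipodeOf_comulOf (hμ : IsHopfGaloisMap k H μ) (x : H) :
    LinearMap.mul' k H (map LinearMap.id (antipodeOf k H μ α) (comulOf k H μ α x)) =
      algebraMap k H (α x) := by
  let Φ : H ⊗[k] (H ⊗[k] T3 k H) →ₗ[k] H := LinearMap.mul' k H
    ∘ₗ map LinearMap.id (counitLeft α H ∘ₗ map LinearMap.id (contractOuter α))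
  have hΘ : Φ ∘ₗ map LinearMap.id (map LinearMap.id μ.toLinearMap) =
      LinearMap.mul' k H ∘ₗ map LinearMap.id (antipodeOf k H μ α)
        ∘ₗ (contractMid α).toLinearMap := by
    ext a b c
    simp [Φ, antipodeOf_eq_comp]
  have hΨ : Φ ∘ₗ reassoc = LinearMap.mul' k H
      ∘ₗ map (counitRight α H ∘ₗ (contractMid α).toLinearMap) (counitRight α H) := by
    ext a b c d e
    simp [Φ, smul_smul, mul_comm, mul_left_comm]
  have counit : (counitRight α H ∘ₗ (contractMid α).toLinearMap) ∘ₗ μ.toLinearMap =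
      LinearMap.id :=
    LinearMap.ext hμ.counitRight_comulOf
  have key := hμ.map_coassoc Φ hΘ hΨ x
  simp only [LinearMap.comp_apply, map_map, LinearMap.comp_id, counit] at key
  refine key.trans ?_
  rw [← LinearMap.comp_apply (LinearMap.mul' k H), mul'_comp_lTensor_counitRight]
  simp [hμ.counit_left, Algebra.algebraMap_eq_smul_one]

end IsHopfGaloisMap

end HopfGalois

theorem stmt9
    (br : H →ₗ[k] H →ₗ[k] H)
    (μ : H →ₐ[k] T3 k H) (hμ : IsHopfGaloisMap k H μ)
    (hP : ∀ a b : H, μ (br a b) = pbrT3 k H br (μ a) (μ b))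
    (α : H →ₐ[k] k) (hα : ∀ a b : H, α (br a b) = 0) :
    (∀ x y : H, comulOf k H μ α (x * y) = comulOf k H μ α x * comulOf k H μ α y) ∧
    comulOf k H μ α 1 = 1 ∧
    ((TensorProduct.assoc k H H H).toLinearMap
        ∘ₗ (TensorProduct.map (comulOf k H μ α) LinearMap.id) ∘ₗ comulOf k H μ α =
      (TensorProduct.map LinearMap.id (comulOf k H μ α)) ∘ₗ comulOf k H μ α) ∧
    (∀ x : H, (TensorProduct.lid k H)
        ((TensorProduct.map α.toLinearMap LinearMap.id) (comulOf k H μ α x)) = x) ∧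
    (∀ x : H, (TensorProduct.rid k H)
        ((TensorProduct.map LinearMap.id α.toLinearMap) (comulOf k H μ α x)) = x) ∧
    (∀ x : H, LinearMap.mul' k H
        ((TensorProduct.map (antipodeOf k H μ α) LinearMap.id) (comulOf k H μ α x)) =
      algebraMap k H (α x)) ∧
    (∀ x : H, LinearMap.mul' k H
        ((TensorProduct.map LinearMap.id (antipodeOf k H μ α)) (comulOf k H μ α x)) =
      algebraMap k H (α x)) ∧
    (∀ x y : H, comulOf k H μ α (br x y) =
      pbrT2 k H br (comulOf k H μ α x) (comulOf k H μ α y)) := by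
  refine ⟨fun x y => ?_, ?_, hμ.comulOf_coassoc, hμ.counitLeft_comulOf, hμ.counitRight_comulOf,
    hμ.mul'_rTensor_antipodeOf_comulOf, hμ.mul'_lTensor_antipodeOf_comulOf, fun x y => ?_⟩
  · simp only [comulOf_apply, map_mul]
  · simp only [comulOf_apply, map_one]
  · rw [comulOf_apply, comulOf_apply, comulOf_apply, hP, contractMid_pbrT3 α br hα]
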